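/- For every m ≥ 0, the unique root E₁(m) ∈ [π²/16, π²/4) of m·sin(2√E) + √E·cos(2√E) = 0 satisfies √(E₁(m)) ≥ (π/2)·(2m)/(1+2m). -/
import Mathlib


open Real

/-- For every `m ≥ 0`, the unique root `E₁(m) ∈ [π²/16, π²/4)` of
`m·sin(2√E) + √E·cos(2√E) = 0` satisfies `√(E₁(m)) ≥ (π/2)·(2m)/(1+2m)`. -/
theorem sqrt_E1_lower_bound (m E : ℝ) (hm : 0 ≤ m)
    (hE : E ∈ Set.Ico (π^2 / 16) (π^2 / 4))
    (hroot : m * Real.sin (2 * Real.sqrt E) + Real.sqrt E * Real.cos (2 * Real.sqrt E) = 0) :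
    Real.sqrt E ≥ (π / 2) * (2 * m) / (1 + 2 * m) := by
  obtain ⟨hE1, hE2⟩ := hE
  have hπ := Real.pi_pos
  set s := Real.sqrt E with hs
  have hs1 : π / 4 ≤ s := by
    have h := Real.sqrt_le_sqrt hE1
    rwa [show π ^ 2 / 16 = (π / 4) ^ 2 by ring, Real.sqrt_sq (by positivity)] at h
  have hs2 : s < π / 2 := by
    have h := Real.sqrt_lt_sqrt (le_trans (by positivity) hE1) hE2
    rwa [show π ^ 2 / 4 = (π / 2) ^ 2 by ring, Real.sqrt_sq (by positivity)] at h
  have hspos : 0 < s := lt_of_lt_of_le (by positivity) hs1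
  have key : m * (π - 2 * s) ≤ s := by
    rcases eq_or_lt_of_le hs1 with h | h
    · have hx : 2 * s = π / 2 := by rw [← h]; ring
      have hm0 : m = 0 := by
        rw [hx, Real.cos_pi_div_two, Real.sin_pi_div_two] at hroot; linarith
      rw [hm0]; linarith
    · set y := π - 2 * s with hy
      have hy1 : 0 < y := by simp only [hy]; linarith
      have hy2 : y < π / 2 := by simp only [hy]; linarith
      have hsiny : Real.sin (2 * s) = Real.sin y := by
        rw [show (2 * s : ℝ) = π - y by simp [hy], Real.sin_pi_sub]
      have hcosy : Real.cos (2 * s) = -Real.cos y := by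
        rw [show (2 * s : ℝ) = π - y by simp [hy], Real.cos_pi_sub]
      have hcy : 0 < Real.cos y := Real.cos_pos_of_mem_Ioo ⟨by linarith, hy2⟩
      have hsy : 0 < Real.sin y := Real.sin_pos_of_pos_of_lt_pi hy1 (by linarith)
      have hroot' : m * Real.sin y = s * Real.cos y := by
        rw [hsiny, hcosy] at hroot; linarith
      have htan : y * Real.cos y ≤ Real.sin y := by
        have h1 : y < Real.tan y := Real.lt_tan hy1 hy2
        have h2 : Real.tan y = Real.sin y / Real.cos y := Real.tan_eq_sin_div_cos y
        rw [h2, lt_div_iff₀ hcy] at h1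
        linarith
      have hmy : m * y * Real.sin y ≤ s * Real.sin y := by
        have : m * y * Real.sin y = s * (y * Real.cos y) := by
          nlinarith [hroot']
        rw [this]
        exact mul_le_mul_of_nonneg_left htan hspos.le
      exact le_of_mul_le_mul_right hmy hsy
  rw [ge_iff_le, div_le_iff₀ (by linarith : (0:ℝ) < 1 + 2 * m)]
  nlinarith [key]
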